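/- arXiv:1301.0707 — 2 statements merged into one kernel-verified Lean document; each statement's English description precedes it below -/
import Mathlib

section
/- Let R be a noetherian commutative ring, I an ideal of R, and 0 → A → B → C → 0 a short exact sequence of finitely generated R-modules with I contained in the annihilator of A. Then there exist finitely generated R-modules A' and A'' annihilated by some power of I, together with a commutative diagram with exact rows comparing 0 → A → B → C → 0 (via the identity on A) to 0 → A → A' → A'' → 0. -/
open Function

/-- Artin–Rees type lemma (module version of Lemma 3.4 of the paper): given a noetherian
commutative ring `R`, an ideal `I`, and a short exact sequence `0 → A → B → C → 0` of finitely
generated `R`-modules with `I` annihilating `A`, there are finitely generated modules `A'`, `A''`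
killed by a power of `I` and a commutative diagram with exact rows comparing the given sequence
(via the identity on `A`) with `0 → A → A' → A'' → 0`. -/
theorem exists_comparison_sequence_killed_by_power
    (R : Type) [CommRing R] [IsNoetherianRing R] (I : Ideal R)
    (A B C : Type) [AddCommGroup A] [Module R A] [Module.Finite R A]
    [AddCommGroup B] [Module R B] [Module.Finite R B]
    [AddCommGroup C] [Module R C] [Module.Finite R C]
    (f : A →ₗ[R] B) (g : B →ₗ[R] C)
    (hf : Injective f) (hg : Surjective g) (hfg : LinearMap.range f = LinearMap.ker g)
    (hIA : ∀ a : A, ∀ i ∈ I, i • a = (0 : A)) :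
    ∃ (A' A'' : ModuleCat.{0} R) (_ : Module.Finite R A') (_ : Module.Finite R A'')
      (n : ℕ)
      (f' : A →ₗ[R] A') (g' : A' →ₗ[R] A'')
      (φ : B →ₗ[R] A') (ψ : C →ₗ[R] A''),
      (∀ a : A', ∀ i ∈ I ^ n, i • a = (0 : A')) ∧
      (∀ a : A'', ∀ i ∈ I ^ n, i • a = (0 : A'')) ∧
      Injective f' ∧ Surjective g' ∧ LinearMap.range f' = LinearMap.ker g' ∧
      φ.comp f = f' ∧ ψ.comp g = g'.comp φ := by
  obtain ⟨k, hk⟩ := Ideal.exists_pow_inf_eq_pow_smul I (LinearMap.range f)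
  set n := k + 1 with hn
  set pB : Submodule R B := I ^ n • ⊤ with hpB
  set pC : Submodule R C := I ^ n • ⊤ with hpC
  have hIN : I • LinearMap.range f = ⊥ := by
    rw [eq_bot_iff, Submodule.smul_le]
    rintro r hr x ⟨a, rfl⟩
    rw [← map_smul, hIA a r hr, map_zero]
    exact Submodule.zero_mem ⊥
  have hkey : pB ⊓ LinearMap.range f = ⊥ := by
    rw [hpB, hk n (Nat.le_add_right k 1), hn, Nat.add_sub_cancel_left, pow_one]
    rw [eq_bot_iff, ← hIN]
    exact Submodule.smul_mono le_rfl inf_le_right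
  have hle : pB ≤ Submodule.comap g pC := by
    rw [hpB, hpC, ← Submodule.map_le_iff_le_comap, Submodule.map_smul'']
    exact Submodule.smul_mono le_rfl le_top
  -- the maps
  let f' : A →ₗ[R] B ⧸ pB := pB.mkQ.comp f
  let g' : B ⧸ pB →ₗ[R] C ⧸ pC := Submodule.mapQ pB pC g hle
  -- annihilation
  have hann1 : ∀ a : B ⧸ pB, ∀ i ∈ I ^ n, i • a = 0 := by
    intro a i hi
    obtain ⟨b, rfl⟩ := pB.mkQ_surjective a
    rw [Submodule.mkQ_apply, ← Submodule.Quotient.mk_smul, Submodule.Quotient.mk_eq_zero]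
    exact Submodule.smul_mem_smul hi trivial
  have hann2 : ∀ a : C ⧸ pC, ∀ i ∈ I ^ n, i • a = 0 := by
    intro a i hi
    obtain ⟨c, rfl⟩ := pC.mkQ_surjective a
    rw [Submodule.mkQ_apply, ← Submodule.Quotient.mk_smul, Submodule.Quotient.mk_eq_zero]
    exact Submodule.smul_mem_smul hi trivial
  have hinj : Injective f' := by
    intro a₁ a₂ h
    apply hf
    have h' : f a₁ - f a₂ ∈ pB := by
      simp only [f', LinearMap.comp_apply, Submodule.mkQ_apply] at h
      rwa [Submodule.Quotient.eq] at h
    have h2 : f a₁ - f a₂ ∈ pB ⊓ LinearMap.range f := ⟨h', a₁ - a₂, by simp⟩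
    rw [hkey, Submodule.mem_bot, sub_eq_zero] at h2
    exact h2
  have hsurj : Surjective g' := by
    intro c
    obtain ⟨c₀, rfl⟩ := pC.mkQ_surjective c
    obtain ⟨b, rfl⟩ := hg c₀
    exact ⟨pB.mkQ b, rfl⟩
  have hexact : LinearMap.range f' = LinearMap.ker g' := by
    apply le_antisymm
    · rintro x ⟨a, rfl⟩
      have hga : g (f a) = 0 := by
        have : f a ∈ LinearMap.ker g := hfg ▸ ⟨a, rfl⟩
        rwa [LinearMap.mem_ker] at this
      simp only [f', g', LinearMap.mem_ker, LinearMap.comp_apply, Submodule.mkQ_apply,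
        Submodule.mapQ_apply, hga]
      exact (Submodule.Quotient.mk_eq_zero _).mpr pC.zero_mem
    · rintro x hx
      obtain ⟨b, rfl⟩ := pB.mkQ_surjective x
      have hx' : g b ∈ pC := by
        have := hx
        simp only [g', LinearMap.mem_ker, Submodule.mkQ_apply, Submodule.mapQ_apply,
          Submodule.Quotient.mk_eq_zero] at this
        exact this
      have hmap : Submodule.map g pB = pC := by
        rw [hpB, hpC, Submodule.map_smul'', Submodule.map_top, LinearMap.range_eq_top.mpr hg]
      have hgb : g b ∈ Submodule.map g pB := by rw [hmap]; exact hx'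
      obtain ⟨b', hb', hbb⟩ := hgb
      have hker : b - b' ∈ LinearMap.ker g := by
        rw [LinearMap.mem_ker, map_sub, hbb, sub_self]
      rw [← hfg] at hker
      obtain ⟨a, ha⟩ := hker
      refine ⟨a, ?_⟩
      simp only [f', LinearMap.comp_apply, Submodule.mkQ_apply, ha]
      rw [← sub_eq_zero, ← Submodule.Quotient.mk_sub, Submodule.Quotient.mk_eq_zero]
      simpa using pB.neg_mem hb'
  have hcomm : pC.mkQ.comp g = g'.comp pB.mkQ := by
    ext b
    simp [g', Submodule.mapQ_apply]
  exact ⟨ModuleCat.of R (B ⧸ pB), ModuleCat.of R (C ⧸ pC),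
    inferInstanceAs (Module.Finite R (B ⧸ pB)), inferInstanceAs (Module.Finite R (C ⧸ pC)),
    n, f', g', pB.mkQ, pC.mkQ, hann1, hann2, hinj, hsurj, hexact, rfl, hcomm⟩
end

section
/- Let k be a field of characteristic 2, G = ℤ/2ℤ × ℤ/2ℤ with generators x, y, and J an n×n matrix over k. Let M_n(J) be the 2n-dimensional kG-module on which x acts by the block matrix [[I, I],[0, I]] and y acts by [[I, J],[0, I]]. Then there is a surjective kG-module homomorphism ε : (kG)ⁿ → M_n(J) whose kernel is isomorphic to M_n(J). -/
/-!
Write `a = x - 1` and `b = y - 1`. Then `1, a, b, ab` is a `k`-basis of `kG`, and in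
characteristic 2 we have `a² = b² = 0`. Let `ε` send the `i`-th basis vector of `(kG)ⁿ` to
`(0, eᵢ)`. Since `a (v, w) = (w, 0)` and `b (v, w) = (J w, 0)`, an element of `(kG)ⁿ` lies in
`ker ε` exactly when its `1`-coordinates vanish and its `a`-coordinates are `J` applied to its
`b`-coordinates. Hence `(v, w) ↦ (J w) a + w b + v ab` maps `M_n(J)` bijectively onto `ker ε`,
and it is `kG`-linear because it commutes with `a` and `b`.
-/

namespace KleinFour

open MonoidAlgebra

abbrev G := Multiplicative (ZMod 2 × ZMod 2)

def gx : G := .ofAdd (1, 0)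
def gy : G := .ofAdd (0, 1)

variable (k : Type*) [CommRing k]

noncomputable def a : MonoidAlgebra k G := of k G gx - 1
noncomputable def b : MonoidAlgebra k G := of k G gy - 1

noncomputable def ofCoeffs (c₀ c₁ c₂ c₃ : k) : MonoidAlgebra k G :=
  c₀ • 1 + c₁ • a k + c₂ • b k + c₃ • (a k * b k)

variable {k}

-- The coordinates in the basis `1, a, b, ab`, read off from `x = 1 + a`, `y = 1 + b`,
-- `xy = 1 + a + b + ab`.
def coeffOne (r : MonoidAlgebra k G) : k :=
  r.coeff 1 + r.coeff gx + r.coeff gy + r.coeff (gx * gy)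
def coeffA (r : MonoidAlgebra k G) : k := r.coeff gx + r.coeff (gx * gy)
def coeffB (r : MonoidAlgebra k G) : k := r.coeff gy + r.coeff (gx * gy)
def coeffAB (r : MonoidAlgebra k G) : k := r.coeff (gx * gy)

lemma ofCoeffs_eq_sum_single (c₀ c₁ c₂ c₃ : k) :
    ofCoeffs k c₀ c₁ c₂ c₃ = single 1 (c₀ - c₁ - c₂ + c₃) + single gx (c₁ - c₃) +
      single gy (c₂ - c₃) + single (gx * gy) c₃ := by
  simp only [ofCoeffs, a, b, one_def, of_apply, sub_mul, mul_sub, single_mul_single, one_mul,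
    mul_one, smul_sub, smul_single', single_sub, single_add]
  abel

section
variable (c₀ c₁ c₂ c₃ : k)

@[simp] lemma coeffOne_ofCoeffs : coeffOne (ofCoeffs k c₀ c₁ c₂ c₃) = c₀ := by
  simp +decide [coeffOne, ofCoeffs_eq_sum_single, gx, gy]
  ring

@[simp] lemma coeffA_ofCoeffs : coeffA (ofCoeffs k c₀ c₁ c₂ c₃) = c₁ := by
  simp +decide [coeffA, ofCoeffs_eq_sum_single, gx, gy]

@[simp] lemma coeffB_ofCoeffs : coeffB (ofCoeffs k c₀ c₁ c₂ c₃) = c₂ := by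
  simp +decide [coeffB, ofCoeffs_eq_sum_single, gx, gy]

@[simp] lemma coeffAB_ofCoeffs : coeffAB (ofCoeffs k c₀ c₁ c₂ c₃) = c₃ := by
  simp +decide [coeffAB, ofCoeffs_eq_sum_single, gx, gy]

end

lemma ofCoeffs_coeffs (r : MonoidAlgebra k G) :
    ofCoeffs k (coeffOne r) (coeffA r) (coeffB r) (coeffAB r) = r := by
  refine coeff_injective (Finsupp.ext fun g => ?_)
  obtain rfl | rfl | rfl | rfl : g = 1 ∨ g = gx ∨ g = gy ∨ g = gx * gy := by revert g; decide
  all_goals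
    simp +decide [coeffOne, coeffA, coeffB, coeffAB, ofCoeffs_eq_sum_single, gx, gy] <;> ring

lemma ofCoeffs_zero : ofCoeffs k 0 0 0 0 = 0 := by
  simp [ofCoeffs]

lemma ofCoeffs_inj {c₀ c₁ c₂ c₃ d₀ d₁ d₂ d₃ : k} :
    ofCoeffs k c₀ c₁ c₂ c₃ = ofCoeffs k d₀ d₁ d₂ d₃ ↔ c₀ = d₀ ∧ c₁ = d₁ ∧ c₂ = d₂ ∧ c₃ = d₃ := by
  refine ⟨fun h => ⟨?_, ?_, ?_, ?_⟩, by rintro ⟨rfl, rfl, rfl, rfl⟩; rfl⟩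
  · simpa using congrArg coeffOne h
  · simpa using congrArg coeffA h
  · simpa using congrArg coeffB h
  · simpa using congrArg coeffAB h

lemma of_sub_one_mul_self [CharP k 2] {M : Type*} [Monoid M] {g : M} (hg : g * g = 1) :
    (of k M g - 1) * (of k M g - 1) = 0 := by
  have h2 : (2 : MonoidAlgebra k M) = 0 := by
    rw [← map_ofNat (algebraMap k _) 2, CharTwo.two_eq_zero, map_zero]
  calc (of k M g - 1) * (of k M g - 1) = of k M (g * g) - 2 * of k M g + 1 := by
        rw [map_mul]; noncomm_ring
    _ = 2 * (1 - of k M g) := by rw [hg, map_one]; noncomm_ring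
    _ = 0 := by rw [h2, zero_mul]

lemma a_mul_self [CharP k 2] : a k * a k = 0 := of_sub_one_mul_self (by decide)

lemma b_mul_self [CharP k 2] : b k * b k = 0 := of_sub_one_mul_self (by decide)

lemma a_mul_ofCoeffs [CharP k 2] (c₀ c₁ c₂ c₃ : k) :
    a k * ofCoeffs k c₀ c₁ c₂ c₃ = ofCoeffs k 0 c₀ 0 c₂ := by
  simp only [ofCoeffs, Algebra.smul_def, map_zero, zero_mul, zero_add, add_zero]
  linear_combination (algebraMap k _ c₁ + algebraMap k _ c₃ * b k) * a_mul_self (k := k)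

lemma b_mul_ofCoeffs [CharP k 2] (c₀ c₁ c₂ c₃ : k) :
    b k * ofCoeffs k c₀ c₁ c₂ c₃ = ofCoeffs k 0 0 c₀ c₁ := by
  simp only [ofCoeffs, Algebra.smul_def, map_zero, zero_mul, zero_add, add_zero]
  linear_combination (algebraMap k _ c₂ + algebraMap k _ c₃ * a k) * b_mul_self (k := k)

section LinearMap

variable {M N : Type*} [AddCommMonoid M] [Module k M] [Module (MonoidAlgebra k G) M]
  [IsScalarTower k (MonoidAlgebra k G) M] [AddCommMonoid N] [Module k N]
  [Module (MonoidAlgebra k G) N] [IsScalarTower k (MonoidAlgebra k G) N]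

lemma ofCoeffs_smul (c₀ c₁ c₂ c₃ : k) (m : M) :
    ofCoeffs k c₀ c₁ c₂ c₃ • m = c₀ • m + c₁ • a k • m + c₂ • b k • m + c₃ • a k • b k • m := by
  simp only [ofCoeffs, add_smul, smul_assoc, one_smul, mul_smul]

noncomputable def linearMapOfCommAB (f : M →ₗ[k] N) (ha : ∀ m, f (a k • m) = a k • f m)
    (hb : ∀ m, f (b k • m) = b k • f m) : M →ₗ[MonoidAlgebra k G] N where
  toFun := f
  map_add' := f.map_add
  map_smul' r m := by
    rw [RingHom.id_apply, ← ofCoeffs_coeffs r, ofCoeffs_smul, ofCoeffs_smul]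
    simp only [map_add, map_smul, ha, hb]

end LinearMap

section Module

open Matrix

variable {ι : Type*} [Fintype ι] (J : Matrix ι ι k)
  [Module (MonoidAlgebra k G) ((ι → k) × (ι → k))]

omit [Fintype ι] in
lemma a_smul (hx : ∀ v w : ι → k, of k G gx • ((v, w) : (ι → k) × (ι → k)) = (v + w, w))
    (v w : ι → k) : a k • ((v, w) : (ι → k) × (ι → k)) = (w, 0) := by
  rw [a, sub_smul, one_smul, hx]
  simp

lemma b_smul (hy : ∀ v w : ι → k, of k G gy • ((v, w) : (ι → k) × (ι → k)) = (v + J *ᵥ w, w))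
    (v w : ι → k) : b k • ((v, w) : (ι → k) × (ι → k)) = (J *ᵥ w, 0) := by
  rw [b, sub_smul, one_smul, hy]
  simp

variable [IsScalarTower k (MonoidAlgebra k G) ((ι → k) × (ι → k))]
  (hx : ∀ v w : ι → k, of k G gx • ((v, w) : (ι → k) × (ι → k)) = (v + w, w))
  (hy : ∀ v w : ι → k, of k G gy • ((v, w) : (ι → k) × (ι → k)) = (v + J *ᵥ w, w))
include hx hy

lemma smul_mk (r : MonoidAlgebra k G) (v w : ι → k) :
    r • ((v, w) : (ι → k) × (ι → k)) =
      (coeffOne r • v + coeffA r • w + coeffB r • J *ᵥ w, coeffOne r • w) := by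
  conv_lhs => rw [← ofCoeffs_coeffs r]
  rw [ofCoeffs_smul, b_smul J hy, a_smul hx, a_smul hx]
  ext <;> simp

variable (k ι) in
noncomputable def freeCover [DecidableEq ι] :
    (ι → MonoidAlgebra k G) →ₗ[MonoidAlgebra k G] (ι → k) × (ι → k) :=
  Fintype.linearCombination (MonoidAlgebra k G) fun i => (0, Pi.single i 1)

lemma freeCover_apply [DecidableEq ι] (f : ι → MonoidAlgebra k G) :
    freeCover k ι f = ((fun i => coeffA (f i)) + J *ᵥ fun i => coeffB (f i),
      fun i => coeffOne (f i)) := by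
  simp only [freeCover, Fintype.linearCombination_apply, smul_mk J hx hy, smul_zero, zero_add]
  ext1
  · simp only [Prod.fst_sum, Finset.sum_add_distrib, ← mulVec_smul, ← mulVec_sum,
      ← pi_eq_sum_univ']
  · simp only [Prod.snd_sum, ← pi_eq_sum_univ']

lemma freeCover_surjective [DecidableEq ι] : Function.Surjective (freeCover k ι) := by
  rintro ⟨v, w⟩
  refine ⟨fun i => ofCoeffs k (w i) (v i) 0 0, ?_⟩
  simp [freeCover_apply J hx hy, ← Pi.zero_def]

omit hx hy

variable (k) in
noncomputable def syzygyₗ : ((ι → k) × (ι → k)) →ₗ[k] (ι → MonoidAlgebra k G) where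
  toFun p i := ofCoeffs k 0 ((J *ᵥ p.2) i) (p.2 i) (p.1 i)
  map_add' p q := by
    ext1 i
    simp only [ofCoeffs, Prod.fst_add, Prod.snd_add, mulVec_add, Pi.add_apply]
    module
  map_smul' c p := by
    ext1 i
    simp only [ofCoeffs, Prod.smul_fst, Prod.smul_snd, mulVec_smul, Pi.smul_apply,
      RingHom.id_apply]
    module

variable [CharP k 2]

noncomputable def syzygy : ((ι → k) × (ι → k)) →ₗ[MonoidAlgebra k G] (ι → MonoidAlgebra k G) :=
  linearMapOfCommAB (syzygyₗ k J) (fun p => by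
    ext1 i
    simp [syzygyₗ, a_smul hx, a_mul_ofCoeffs]) (fun p => by
    ext1 i
    simp [syzygyₗ, b_smul J hy, b_mul_ofCoeffs])

include hx hy

lemma syzygy_apply (p : (ι → k) × (ι → k)) (i : ι) :
    syzygy J hx hy p i = ofCoeffs k 0 ((J *ᵥ p.2) i) (p.2 i) (p.1 i) := rfl

lemma syzygy_injective : Function.Injective (syzygy J hx hy) := by
  refine (injective_iff_map_eq_zero _).2 fun p hp => ?_
  have h i := congrFun hp i
  simp only [syzygy_apply, Pi.zero_apply, ← ofCoeffs_zero, ofCoeffs_inj] at h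
  ext i
  exacts [(h i).2.2.2, (h i).2.2.1]

lemma range_syzygy [DecidableEq ι] :
    LinearMap.range (syzygy J hx hy) = LinearMap.ker (freeCover k ι) := by
  ext f
  simp only [LinearMap.mem_range, LinearMap.mem_ker, freeCover_apply J hx hy, Prod.mk_eq_zero]
  constructor
  · rintro ⟨p, rfl⟩
    refine ⟨funext fun i => ?_, funext fun i => ?_⟩ <;>
      simp [syzygy_apply, CharTwo.add_self_eq_zero]
  · rintro ⟨hA, hOne⟩
    refine ⟨(fun i => coeffAB (f i), fun i => coeffB (f i)), funext fun i => ?_⟩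
    rw [syzygy_apply, ← ofCoeffs_coeffs (f i), ofCoeffs_inj]
    refine ⟨(congrFun hOne i).symm, ?_, rfl, rfl⟩
    exact (CharTwo.add_eq_zero.1 (congrFun hA i)).symm

end Module

end KleinFour

/-- Let `k` have characteristic 2, `G = ℤ/2 × ℤ/2` with generators `x`, `y`, and `J` an `n × n`
matrix over `k`. Let `M_n(J)` be the `2n`-dimensional `kG`-module `(Fin n → k) × (Fin n → k)` on
which `x` acts by `[[I, I], [0, I]]` and `y` acts by `[[I, J], [0, I]]`. Then there is a
surjective `kG`-linear map `ε : (kG)ⁿ → M_n(J)` whose kernel is isomorphic to `M_n(J)`. -/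
theorem klein_four_even_module_periodic
    (k : Type) [Field k] [CharP k 2] (n : ℕ) (J : Matrix (Fin n) (Fin n) k)
    [Module (MonoidAlgebra k (Multiplicative (ZMod 2 × ZMod 2)))
      ((Fin n → k) × (Fin n → k))]
    [IsScalarTower k (MonoidAlgebra k (Multiplicative (ZMod 2 × ZMod 2)))
      ((Fin n → k) × (Fin n → k))]
    (hx : ∀ v w : Fin n → k,
      (MonoidAlgebra.of k (Multiplicative (ZMod 2 × ZMod 2))
          (Multiplicative.ofAdd ((1 : ZMod 2), (0 : ZMod 2)))) •
        ((v, w) : (Fin n → k) × (Fin n → k)) = (v + w, w))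
    (hy : ∀ v w : Fin n → k,
      (MonoidAlgebra.of k (Multiplicative (ZMod 2 × ZMod 2))
          (Multiplicative.ofAdd ((0 : ZMod 2), (1 : ZMod 2)))) •
        ((v, w) : (Fin n → k) × (Fin n → k)) = (v + J.mulVec w, w)) :
    ∃ ε : (Fin n → MonoidAlgebra k (Multiplicative (ZMod 2 × ZMod 2)))
        →ₗ[MonoidAlgebra k (Multiplicative (ZMod 2 × ZMod 2))]
        ((Fin n → k) × (Fin n → k)),
      Function.Surjective ε ∧
        Nonempty ((LinearMap.ker ε)
          ≃ₗ[MonoidAlgebra k (Multiplicative (ZMod 2 × ZMod 2))]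
          ((Fin n → k) × (Fin n → k))) :=
  ⟨KleinFour.freeCover k (Fin n), KleinFour.freeCover_surjective J hx hy,
    ⟨((LinearEquiv.ofInjective _ (KleinFour.syzygy_injective J hx hy)).trans
      (LinearEquiv.ofEq _ _ (KleinFour.range_syzygy J hx hy))).symm⟩⟩
end
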